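/- Let r ≥ 1 and k ≥ 2 be integers and let G = (V,E) be a finite simple graph. Then m_e(G □ P_k, r) ≤ m_e(G,r) + (k−1)·m_e(G,r−1) + d_{r−1}(G) + (k−1)·(d_0(G) + d_1(G) + … + d_{r−2}(G)), where the sum d_0 + … + d_{r−2} is empty when r = 1. -/

import Mathlib

/-!
Seed layer `0` of `G □ P_k` with a set percolating in `G` for threshold `r`, and every other
layer with one for threshold `r - 1`. Once layer `i` is fully infected, the vertex `(v, i)` has
`deg v` infected layer edges plus the infected rung from layer `i - 1` (if `i > 0`), so it fires
along the rung to layer `i + 1` unless `deg v < r` (for `i = 0`) or `deg v < r - 1` (for `i > 0`);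
exactly those rungs are seeded directly, costing `d_{r-1} + ∑_{t < r-1} d_t` and
`∑_{t < r-1} d_t` respectively. The rungs into layer `i + 1` then lower its threshold to `r - 1`,
so its seed percolates and the layers fill in one after another.
-/

open Polynomial

/-- A set `S` of edges is closed under the `r`-bond bootstrap infection rule: whenever a
vertex `v` is incident to at least `r` edges in `S`, all edges incident to `v` are in `S`. -/
def BondClosed {V : Type*} (G : SimpleGraph V) (r : ℕ) (S : Set (Sym2 V)) : Prop :=
  ∀ v : V, r ≤ {u | G.Adj v u ∧ s(v, u) ∈ S}.ncard → ∀ w : V, G.Adj v w → s(v, w) ∈ S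

/-- `F` percolates in the `r`-bond bootstrap process on `G`: every set of edges containing `F`
that is closed under the infection rule contains all edges of `G`. -/
def BondPercolates {V : Type*} (G : SimpleGraph V) (r : ℕ) (F : Set (Sym2 V)) : Prop :=
  ∀ S : Set (Sym2 V), F ⊆ S → BondClosed G r S → G.edgeSet ⊆ S

/-- `mEdge G r` is the minimum size of a set of edges of `G` percolating in the `r`-bond
bootstrap process, i.e. `m_e(G,r)`. -/
noncomputable def mEdge {V : Type*} (G : SimpleGraph V) (r : ℕ) : ℕ :=
  sInf {n | ∃ F : Finset (Sym2 V), ↑F ⊆ G.edgeSet ∧ BondPercolates G r ↑F ∧ F.card = n}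

/-- A set `S` of vertices is closed under the `r`-neighbour bootstrap infection rule. -/
def NeighClosed {V : Type*} (G : SimpleGraph V) (r : ℕ) (S : Set V) : Prop :=
  ∀ v : V, r ≤ {u | G.Adj v u ∧ u ∈ S}.ncard → v ∈ S

/-- `A` percolates in the `r`-neighbour bootstrap process on `G`. -/
def NeighPercolates {V : Type*} (G : SimpleGraph V) (r : ℕ) (A : Set V) : Prop :=
  ∀ S : Set V, A ⊆ S → NeighClosed G r S → ∀ v : V, v ∈ S

/-- `mVertex G r` is the minimum size of a percolating set of vertices for the `r`-neighbour
bootstrap process, i.e. `m(G,r)`. -/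
noncomputable def mVertex {V : Type*} (G : SimpleGraph V) (r : ℕ) : ℕ :=
  sInf {n | ∃ A : Finset V, NeighPercolates G r ↑A ∧ A.card = n}

/-- `c` is a proper edge colouring of `G`: distinct edges sharing an endpoint get distinct
colours. -/
def ProperEdgeColouring {V : Type*} (G : SimpleGraph V) (c : Sym2 V → ℝ) : Prop :=
  ∀ e₁ ∈ G.edgeSet, ∀ e₂ ∈ G.edgeSet, e₁ ≠ e₂ → (∃ v : V, v ∈ e₁ ∧ v ∈ e₂) → c e₁ ≠ c e₂

/-- The space `W^r_{G,c}` of functions on edges recognized by systems of polynomials of degree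
at most `r - 1` (degree `< r`) attached to the vertices. Functions are represented as functions
on `Sym2 V` vanishing outside the edge set of `G`. -/
noncomputable def Wspace {V : Type*} (G : SimpleGraph V) (c : Sym2 V → ℝ) (r : ℕ) :
    Submodule ℝ (Sym2 V → ℝ) where
  carrier := {φ | (∀ e, e ∉ G.edgeSet → φ e = 0) ∧
    ∃ p : V → ℝ[X], (∀ v, (p v).degree < (r : WithBot ℕ)) ∧
      ∀ v w : V, G.Adj v w → (p v).eval (c s(v, w)) = φ s(v, w)}
  zero_mem' := ⟨fun _ _ => rfl, fun _ => 0,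
    fun _ => by simp [Polynomial.degree_zero], fun _ _ _ => by simp⟩
  add_mem' := by
    rintro φ ψ ⟨hφ0, p, hp, hpe⟩ ⟨hψ0, q, hq, hqe⟩
    exact ⟨fun e he => by simp [hφ0 e he, hψ0 e he], fun v => p v + q v,
      fun v => lt_of_le_of_lt (Polynomial.degree_add_le _ _) (max_lt (hp v) (hq v)),
      fun v w hvw => by simp [hpe v w hvw, hqe v w hvw]⟩
  smul_mem' := by
    rintro a φ ⟨hφ0, p, hp, hpe⟩
    exact ⟨fun e he => by simp [hφ0 e he], fun v => a • p v,
      fun v => lt_of_le_of_lt (Polynomial.degree_smul_le _ _) (hp v),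
      fun v w hvw => by simp [hpe v w hvw]⟩

/-- `degCount G t` is the number of vertices of `G` of degree exactly `t`. -/
noncomputable def degCount {V : Type*} (G : SimpleGraph V) (t : ℕ) : ℕ :=
  {v : V | (G.neighborSet v).ncard = t}.ncard

open SimpleGraph Finset

lemma exists_bondPercolates_card_eq_mEdge {V : Type*} [Finite V] (G : SimpleGraph V) (r : ℕ) :
    ∃ F : Finset (Sym2 V), ↑F ⊆ G.edgeSet ∧ BondPercolates G r ↑F ∧ F.card = mEdge G r := by
  have hne : {n | ∃ F : Finset (Sym2 V), ↑F ⊆ G.edgeSet ∧ BondPercolates G r ↑F ∧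
      F.card = n}.Nonempty :=
    ⟨_, G.edgeSet.toFinite.toFinset, by rw [Set.Finite.coe_toFinset],
      fun _ hF _ _ he => hF (by rwa [Set.Finite.coe_toFinset]), rfl⟩
  exact Nat.sInf_mem hne

lemma mEdge_le_card {V : Type*} {G : SimpleGraph V} {r : ℕ} {F : Finset (Sym2 V)}
    (hFG : ↑F ⊆ G.edgeSet) (hF : BondPercolates G r ↑F) : mEdge G r ≤ F.card :=
  Nat.sInf_le ⟨F, hFG, hF, rfl⟩

section BoxProd

variable {V W : Type*} {G : SimpleGraph V} {H : SimpleGraph W} {r : ℕ}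

/-- The set whose size the infection rule of `BondClosed` compares with `r`. -/
def infectedNeighborSet (G : SimpleGraph V) (S : Set (Sym2 V)) (v : V) : Set V :=
  {u | G.Adj v u ∧ s(v, u) ∈ S}

lemma infectedNeighborSet_eq_neighborSet {S : Set (Sym2 V)} (hS : G.edgeSet ⊆ S) (v : V) :
    infectedNeighborSet G S v = G.neighborSet v :=
  Set.ext fun _ => and_iff_left_of_imp fun h => hS h

def layerPullback (S : Set (Sym2 (V × W))) (i : W) : Set (Sym2 V) :=
  {e | e.map (·, i) ∈ S}

variable {S : Set (Sym2 (V × W))} {i j : W} {v : V}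

lemma image_infectedNeighborSet_layerPullback_subset :
    (·, i) '' infectedNeighborSet G (layerPullback S i) v ⊆
      infectedNeighborSet (G □ H) S (v, i) := by
  rintro _ ⟨u, ⟨huv, hu⟩, rfl⟩
  exact ⟨boxProd_adj_left.2 huv, hu⟩

variable [Finite V] [Finite W]

lemma ncard_infectedNeighborSet_layerPullback_le :
    (infectedNeighborSet G (layerPullback S i) v).ncard ≤
      (infectedNeighborSet (G □ H) S (v, i)).ncard := by
  rw [← Set.ncard_image_of_injective _ (Prod.mk_left_injective i)]
  exact Set.ncard_le_ncard image_infectedNeighborSet_layerPullback_subset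

lemma ncard_infectedNeighborSet_layerPullback_add_one_le (hij : H.Adj i j)
    (hrung : s((v, i), (v, j)) ∈ S) :
    (infectedNeighborSet G (layerPullback S i) v).ncard + 1 ≤
      (infectedNeighborSet (G □ H) S (v, i)).ncard := by
  have hnotMem : (v, j) ∉ (·, i) '' infectedNeighborSet G (layerPullback S i) v :=
    fun ⟨_, _, h⟩ => hij.ne (congrArg Prod.snd h)
  rw [← Set.ncard_image_of_injective _ (Prod.mk_left_injective i),
    ← Set.ncard_insert_of_notMem hnotMem]
  exact Set.ncard_le_ncard <| Set.insert_subset ⟨boxProd_adj_right.2 hij, hrung⟩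
    image_infectedNeighborSet_layerPullback_subset

lemma BondClosed.of_boxProd (hS : BondClosed (G □ H) r S) (i : W) :
    BondClosed G r (layerPullback S i) := fun v hv w hw =>
  hS (v, i) (hv.trans ncard_infectedNeighborSet_layerPullback_le) (w, i) (boxProd_adj_left.2 hw)

lemma BondClosed.of_boxProd_of_rungs (hS : BondClosed (G □ H) r S) (hij : H.Adj i j)
    (hrung : ∀ v, s((v, i), (v, j)) ∈ S) : BondClosed G (r - 1) (layerPullback S i) :=
  fun v hv w hw => by
    have := ncard_infectedNeighborSet_layerPullback_add_one_le (G := G) hij (hrung v)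
    exact hS (v, i) (by unfold infectedNeighborSet at this; omega) (w, i) (boxProd_adj_left.2 hw)

omit [Finite V] [Finite W] in
lemma edgeSet_boxProd_subset (hlayer : ∀ i, G.edgeSet ⊆ layerPullback S i)
    (hrung : ∀ v i j, H.Adj i j → s((v, i), (v, j)) ∈ S) : (G □ H).edgeSet ⊆ S := by
  intro e he
  induction e using Sym2.ind with
  | _ x y =>
    obtain ⟨u, i⟩ := x
    obtain ⟨w, j⟩ := y
    rcases he with ⟨huw, rfl : i = j⟩ | ⟨hij, rfl : u = w⟩
    · exact hlayer i (show s(u, w) ∈ G.edgeSet from huw)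
    · exact hrung u i j hij

end BoxProd

section Degrees

variable {V : Type*} [Fintype V] (G : SimpleGraph V)

lemma degCount_eq_card_filter (t : ℕ) :
    degCount G t = #{v | (G.neighborSet v).ncard = t} := by
  rw [degCount, ← Set.ncard_coe_finset]
  congr 1
  ext
  simp

lemma card_filter_ncard_neighborSet_lt (m : ℕ) :
    #{v | (G.neighborSet v).ncard < m} = ∑ t ∈ range m, degCount G t := by
  rw [card_eq_sum_card_fiberwise (f := fun v => (G.neighborSet v).ncard) (t := range m)
    (fun v hv => mem_range.2 (mem_filter.1 hv).2)]
  refine sum_congr rfl fun t ht => ?_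
  rw [degCount_eq_card_filter, filter_filter]
  congr 1
  ext v
  simp only [mem_filter, mem_univ, true_and, and_iff_right_iff_imp]
  rintro rfl
  exact mem_range.1 ht

end Degrees

section PathGraph

variable {V : Type*} {G : SimpleGraph V} {n r : ℕ}

def rung (v : V) (i : Fin n) : Sym2 (V × Fin (n + 1)) :=
  s((v, i.castSucc), (v, i.succ))

lemma pathGraph_adj_castSucc_succ (i : Fin n) : (pathGraph (n + 1)).Adj i.castSucc i.succ :=
  pathGraph_adj.2 (Or.inl rfl)

lemma forall_pathGraph_adj_mem_of_rung_mem {S : Set (Sym2 (V × Fin (n + 1)))}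
    (h : ∀ v i, rung v i ∈ S) (v : V) {a b : Fin (n + 1)} (hab : (pathGraph (n + 1)).Adj a b) :
    s((v, a), (v, b)) ∈ S := by
  have hforward : ∀ a b : Fin (n + 1), a.val + 1 = b.val → s((v, a), (v, b)) ∈ S := by
    intro a b hab
    obtain ⟨i, rfl, rfl⟩ : ∃ i : Fin n, i.castSucc = a ∧ i.succ = b :=
      ⟨⟨a, by omega⟩, rfl, Fin.ext hab⟩
    exact h v i
  rcases pathGraph_adj.1 hab with hab | hba
  · exact hforward a b hab
  · exact Sym2.eq_swap ▸ hforward b a hba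

def layerThreshold (r : ℕ) (i : Fin (n + 1)) : ℕ :=
  if i = 0 then r else r - 1

@[simp]
lemma layerThreshold_zero : layerThreshold r (0 : Fin (n + 1)) = r :=
  if_pos rfl

@[simp]
lemma layerThreshold_succ (i : Fin n) : layerThreshold r i.succ = r - 1 :=
  if_neg i.succ_ne_zero

variable [Fintype V] [DecidableEq V]

variable (G n r) in
noncomputable def pathSeed (F₀ F₁ : Finset (Sym2 V)) : Finset (Sym2 (V × Fin (n + 1))) :=
  (univ.biUnion fun i => (if i = 0 then F₀ else F₁).image (Sym2.map (·, i))) ∪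
    univ.biUnion fun i : Fin n =>
      ({v | (G.neighborSet v).ncard < layerThreshold r i.castSucc} : Finset V).image (rung · i)

lemma pathSeed_subset_edgeSet {F₀ F₁ : Finset (Sym2 V)} (h₀ : ↑F₀ ⊆ G.edgeSet)
    (h₁ : ↑F₁ ⊆ G.edgeSet) : ↑(pathSeed G n r F₀ F₁) ⊆ (G □ pathGraph (n + 1)).edgeSet := by
  intro e he
  simp only [pathSeed, coe_union, coe_biUnion, coe_image, Set.mem_union, Set.mem_iUnion,
    Set.mem_image, mem_coe, mem_univ, Set.iUnion_true] at he
  rcases he with ⟨i, e, he, rfl⟩ | ⟨i, v, -, rfl⟩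
  · induction e using Sym2.ind with
    | _ u w =>
      have huw : G.Adj u w := by split_ifs at he <;> [exact h₀ he; exact h₁ he]
      exact boxProd_adj_left.2 huw
  · exact boxProd_adj_right.2 (pathGraph_adj_castSucc_succ i)

omit [DecidableEq V] in
lemma sum_card_filter_lt_layerThreshold_le :
    ∑ i : Fin n, #{v | (G.neighborSet v).ncard < layerThreshold r i.castSucc} ≤
      degCount G (r - 1) + n * ∑ t ∈ range (r - 1), degCount G t := by
  cases n with
  | zero => simp
  | succ m =>
    have hzero : #{v | (G.neighborSet v).ncard < r} ≤
        degCount G (r - 1) + ∑ t ∈ range (r - 1), degCount G t := by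
      calc #{v | (G.neighborSet v).ncard < r}
          ≤ #{v | (G.neighborSet v).ncard < r - 1 + 1} :=
            card_le_card (monotone_filter_right _ fun _ _ h => by omega)
        _ = _ := by rw [card_filter_ncard_neighborSet_lt, sum_range_succ, add_comm]
    rw [Fin.sum_univ_succ]
    simp only [Fin.castSucc_zero, layerThreshold_zero, ← Fin.succ_castSucc, layerThreshold_succ,
      sum_const, card_univ, Fintype.card_fin, smul_eq_mul]
    rw [card_filter_ncard_neighborSet_lt G (r - 1)]
    linarith

lemma card_pathSeed_le (F₀ F₁ : Finset (Sym2 V)) :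
    #(pathSeed G n r F₀ F₁) ≤ #F₀ + n * #F₁ + degCount G (r - 1)
      + n * ∑ t ∈ range (r - 1), degCount G t := by
  have hlayers : #(univ.biUnion fun i : Fin (n + 1) =>
      (if i = 0 then F₀ else F₁).image (Sym2.map (·, i))) ≤ #F₀ + n * #F₁ :=
    calc _ ≤ ∑ i : Fin (n + 1), #(if i = 0 then F₀ else F₁) :=
          card_biUnion_le.trans (sum_le_sum fun _ _ => card_image_le)
      _ = #F₀ + n * #F₁ := by simp [Fin.sum_univ_succ, Fin.succ_ne_zero]
  have hrungs : #(univ.biUnion fun i : Fin n =>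
      ({v | (G.neighborSet v).ncard < layerThreshold r i.castSucc} : Finset V).image (rung · i)) ≤
        degCount G (r - 1) + n * ∑ t ∈ range (r - 1), degCount G t :=
    card_biUnion_le.trans <| (sum_le_sum fun _ _ => card_image_le).trans
      sum_card_filter_lt_layerThreshold_le
  exact (card_union_le _ _).trans ((add_le_add hlayers hrungs).trans_eq (by ring))

section Percolation

variable {F₀ F₁ : Finset (Sym2 V)} {S : Set (Sym2 (V × Fin (n + 1)))}

lemma coe_layerSeed_subset_layerPullback (hseed : ↑(pathSeed G n r F₀ F₁) ⊆ S)
    (i : Fin (n + 1)) : ↑(if i = 0 then F₀ else F₁) ⊆ layerPullback S i := fun _ he =>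
  hseed (mem_union_left _ (mem_biUnion.2 ⟨i, mem_univ _, mem_image_of_mem _ he⟩))

lemma rung_mem_of_pathSeed_subset (hseed : ↑(pathSeed G n r F₀ F₁) ⊆ S)
    (hS : BondClosed (G □ pathGraph (n + 1)) r S) (i : Fin n)
    (hfire : ∀ v, layerThreshold r i.castSucc ≤ (G.neighborSet v).ncard →
      r ≤ (infectedNeighborSet (G □ pathGraph (n + 1)) S (v, i.castSucc)).ncard) (v : V) :
    rung v i ∈ S := by
  by_cases hv : (G.neighborSet v).ncard < layerThreshold r i.castSucc
  · exact hseed (mem_union_right _ (mem_biUnion.2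
      ⟨i, mem_univ _, mem_image_of_mem _ (mem_filter.2 ⟨mem_univ _, hv⟩)⟩))
  · exact hS _ (hfire v (not_lt.1 hv)) _ (boxProd_adj_right.2 (pathGraph_adj_castSucc_succ i))

theorem bondPercolates_pathSeed (h₀ : BondPercolates G r ↑F₀)
    (h₁ : BondPercolates G (r - 1) ↑F₁) :
    BondPercolates (G □ pathGraph (n + 1)) r ↑(pathSeed G n r F₀ F₁) := by
  intro S hseed hS
  have layer : ∀ i : Fin (n + 1), G.edgeSet ⊆ layerPullback S i ∧
      ∀ v, layerThreshold r i ≤ (G.neighborSet v).ncard →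
        r ≤ (infectedNeighborSet (G □ pathGraph (n + 1)) S (v, i)).ncard := by
    refine Fin.induction ?_ fun i ih => ?_
    · have hfull := h₀ _ (by simpa using coe_layerSeed_subset_layerPullback hseed 0)
        (hS.of_boxProd 0)
      refine ⟨hfull, fun v hv => ?_⟩
      rw [layerThreshold_zero] at hv
      calc r ≤ (G.neighborSet v).ncard := hv
        _ = _ := by rw [← infectedNeighborSet_eq_neighborSet hfull]
        _ ≤ _ := ncard_infectedNeighborSet_layerPullback_le
    · have hadj := (pathGraph_adj_castSucc_succ i).symm
      have hrung : ∀ v, s((v, i.succ), (v, i.castSucc)) ∈ S := fun v =>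
        Sym2.eq_swap ▸ rung_mem_of_pathSeed_subset hseed hS i ih.2 v
      have hfull := h₁ _ (by simpa [Fin.succ_ne_zero] using
        coe_layerSeed_subset_layerPullback hseed i.succ) (hS.of_boxProd_of_rungs hadj hrung)
      refine ⟨hfull, fun v hv => ?_⟩
      have := ncard_infectedNeighborSet_layerPullback_add_one_le (G := G) hadj (hrung v)
      rw [infectedNeighborSet_eq_neighborSet hfull] at this
      rw [layerThreshold_succ] at hv
      omega
  exact edgeSet_boxProd_subset (fun i => (layer i).1) fun v _ _ =>
    forall_pathGraph_adj_mem_of_rung_mem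
      (fun v i => rung_mem_of_pathSeed_subset hseed hS i (layer _).2 v) v

end Percolation

end PathGraph

theorem stmt7_general {V : Type*} [Fintype V] (G : SimpleGraph V) (r k : ℕ)
    (hk : 2 ≤ k) :
    mEdge (G.boxProd (SimpleGraph.pathGraph k)) r ≤
      mEdge G r + (k - 1) * mEdge G (r - 1) + degCount G (r - 1)
        + (k - 1) * ∑ t ∈ Finset.range (r - 1), degCount G t := by
  classical
  obtain ⟨n, rfl⟩ : ∃ n, k = n + 1 := ⟨k - 1, by omega⟩
  obtain ⟨F₀, hF₀G, hF₀, hF₀card⟩ := exists_bondPercolates_card_eq_mEdge G r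
  obtain ⟨F₁, hF₁G, hF₁, hF₁card⟩ := exists_bondPercolates_card_eq_mEdge G (r - 1)
  calc mEdge (G □ pathGraph (n + 1)) r ≤ #(pathSeed G n r F₀ F₁) :=
        mEdge_le_card (pathSeed_subset_edgeSet hF₀G hF₁G) (bondPercolates_pathSeed hF₀ hF₁)
    _ ≤ _ := by simpa [hF₀card, hF₁card] using card_pathSeed_le F₀ F₁

/-- Upper bound for `m_e(G □ P_k, r)`; the sum over `t ∈ range (r-1)` is
`d_0 + ⋯ + d_{r-2}` and is empty when `r = 1`. -/
theorem stmt7 {V : Type*} [Fintype V] (G : SimpleGraph V) (r k : ℕ) (hr : 1 ≤ r)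
    (hk : 2 ≤ k) :
    mEdge (G.boxProd (SimpleGraph.pathGraph k)) r ≤
      mEdge G r + (k - 1) * mEdge G (r - 1) + degCount G (r - 1)
        + (k - 1) * ∑ t ∈ Finset.range (r - 1), degCount G t :=
  stmt7_general G r k hk
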